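/- arXiv:2312.09381 — 3 statements merged into one kernel-verified Lean document; each statement's English description precedes it below -/
import Mathlib

section
/- Let p be an odd prime and r an integer not divisible by p such that p divides the multiplicative order of r modulo p^N. Then the cyclic subgroup of (Z/p^{N+1}Z)^× generated by r consists exactly of those units k of Z/p^{N+1}Z whose reduction modulo p^N lies in the cyclic subgroup of (Z/p^N Z)^× generated by r. -/
/-!
Write `d` for the order of `r` modulo `p ^ N`. By lifting the exponent, for `N ≥ 1` a residue `x`
modulo `p ^ (N + 1)` satisfies `x ^ p = 1` exactly when `x ≡ 1 [mod p ^ N]`. Applied to `r ^ d`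
and to `r ^ (d / p)` this shows that the order of `r` modulo `p ^ (N + 1)` is `p * d`. The
preimage of `⟨r mod p ^ N⟩` under reduction also has `p * d` elements, because the reduction map
on unit groups is surjective and `φ (p ^ (N + 1)) = p * φ (p ^ N)`; it contains `⟨r⟩`, so the two
coincide.
-/

open Subgroup

theorem Int.pow_succ_dvd_pow_prime_sub_one_iff {p : ℕ} (hp : p.Prime) (hodd : Odd p) {x : ℤ}
    (hx : (p : ℤ) ∣ x - 1) (N : ℕ) :
    (p : ℤ) ^ (N + 1) ∣ x ^ p - 1 ↔ (p : ℤ) ^ N ∣ x - 1 := by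
  have hpZ : Prime (p : ℤ) := Nat.prime_iff_prime_int.mp hp
  have hx' : ¬ (p : ℤ) ∣ x := fun h => hpZ.not_dvd_one (by simpa using dvd_sub h hx)
  have lte := emultiplicity_pow_prime_sub_pow_prime hpZ hodd hx hx'
  rw [one_pow] at lte
  rw [pow_dvd_iff_le_emultiplicity, pow_dvd_iff_le_emultiplicity, lte, Nat.cast_add, Nat.cast_one]
  exact ENat.add_le_add_iff_right ENat.one_ne_top

theorem ZMod.intCast_eq_one_iff_dvd (x : ℤ) (n : ℕ) : (x : ZMod n) = 1 ↔ (n : ℤ) ∣ x - 1 := by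
  rw [eq_comm, ← Int.cast_one, ZMod.intCast_eq_intCast_iff_dvd_sub]

theorem ZMod.pow_prime_eq_one_iff_castHom_eq_one {p : ℕ} [Fact p.Prime] (hodd : Odd p) {N : ℕ}
    (hN : N ≠ 0) (a : ZMod (p ^ (N + 1))) :
    a ^ p = 1 ↔ ZMod.castHom (pow_dvd_pow p N.le_succ) (ZMod (p ^ N)) a = 1 := by
  obtain ⟨x, rfl⟩ := ZMod.intCast_surjective a
  have fermat : (p : ℤ) ∣ x ^ p - 1 → (p : ℤ) ∣ x - 1 := by
    simp only [← intCast_eq_one_iff_dvd, Int.cast_pow, ZMod.pow_card, imp_self]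
  rw [map_intCast, ← Int.cast_pow, intCast_eq_one_iff_dvd, intCast_eq_one_iff_dvd, Nat.cast_pow,
    Nat.cast_pow]
  refine ⟨fun h => ?_, fun h => ?_⟩
  · exact (Int.pow_succ_dvd_pow_prime_sub_one_iff Fact.out hodd
      (fermat ((dvd_pow_self _ N.succ_ne_zero).trans h)) N).mp h
  · exact (Int.pow_succ_dvd_pow_prime_sub_one_iff Fact.out hodd
      ((dvd_pow_self _ hN).trans h) N).mpr h

theorem ZMod.card_units_prime_pow_succ {p : ℕ} [Fact p.Prime] {N : ℕ} (hN : N ≠ 0) :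
    Nat.card (ZMod (p ^ (N + 1)))ˣ = p * Nat.card (ZMod (p ^ N))ˣ := by
  rw [Nat.card_eq_fintype_card, Nat.card_eq_fintype_card, ZMod.card_units_eq_totient,
    ZMod.card_units_eq_totient, pow_succ',
    Nat.totient_mul_of_prime_of_dvd Fact.out (dvd_pow_self p hN)]

theorem orderOf_eq_prime_mul_orderOf_map {G H : Type*} [Group G] [Group H] [Finite H]
    (f : G →* H) {p : ℕ} [Fact p.Prime] (hf : ∀ x, x ^ p = 1 ↔ f x = 1) {g : G}
    (hg : p ∣ orderOf (f g)) : orderOf g = p * orderOf (f g) := by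
  set d := orderOf (f g)
  have hd : d ≠ 0 := (orderOf_pos (f g)).ne'
  have hdg : d ∣ orderOf g := orderOf_map_dvd f g
  have hgd : orderOf (g ^ d) = p := by
    apply orderOf_eq_prime
    · rw [hf, map_pow, pow_orderOf_eq_one]
    · obtain ⟨e, he⟩ := hg
      intro h1
      have hde : d ∣ e := by
        rw [orderOf_dvd_iff_pow_eq_one, ← map_pow, ← hf, ← pow_mul, mul_comm, ← he, h1]
      have hd_eq : d = e := Nat.dvd_antisymm hde (he ▸ dvd_mul_left e p)
      rw [hd_eq] at hd he
      exact (Fact.out : p.Prime).ne_one ((mul_eq_right₀ hd).mp he.symm)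
  rw [orderOf_pow_of_dvd hd hdg] at hgd
  rw [← hgd, Nat.div_mul_cancel hdg]

theorem Subgroup.zpowers_eq_comap_zpowers_map {G H : Type*} [Group G] [Group H] [Finite G]
    (f : G →* H) (hf : Function.Surjective f) {m : ℕ} (hcard : Nat.card G = m * Nat.card H)
    {g : G} (hg : orderOf g = m * orderOf (f g)) : zpowers g = (zpowers (f g)).comap f := by
  have : Finite H := Finite.of_surjective f hf
  have hle : zpowers g ≤ (zpowers (f g)).comap f := by
    rw [zpowers_le, mem_comap]
    exact mem_zpowers _
  refine eq_of_le_of_card_ge hle (le_of_eq ?_)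
  have hK := card_mul_index ((zpowers (f g)).comap f)
  rw [index_comap_of_surjective _ hf, hcard, ← card_mul_index (zpowers (f g)), Nat.card_zpowers,
    ← mul_assoc, ← hg] at hK
  rw [Nat.card_zpowers]
  exact Nat.eq_of_mul_eq_mul_right (Nat.pos_of_ne_zero index_ne_zero_of_finite) hK

theorem subgroup_mod_p_pow_succ_general (p : ℕ) [Fact p.Prime] (hp : Odd p) (r : ℤ)
    (N : ℕ) (hN : 1 ≤ N)
    (hord : p ∣ orderOf ((r : ZMod (p ^ N))))
    (hu1 : IsUnit ((r : ZMod (p ^ (N + 1))))) (hu2 : IsUnit ((r : ZMod (p ^ N)))) :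
    ∀ k : (ZMod (p ^ (N + 1)))ˣ,
      k ∈ Subgroup.zpowers hu1.unit ↔
        Units.map (ZMod.castHom (pow_dvd_pow p (Nat.le_succ N)) (ZMod (p ^ N))).toMonoidHom k
          ∈ Subgroup.zpowers hu2.unit := by
  set f := Units.map (ZMod.castHom (pow_dvd_pow p (Nat.le_succ N)) (ZMod (p ^ N))).toMonoidHom
  have hfu : f hu1.unit = hu2.unit := Units.ext (map_intCast (ZMod.castHom _ _) r)
  have hker (x : (ZMod (p ^ (N + 1)))ˣ) : x ^ p = 1 ↔ f x = 1 := by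
    rw [Units.ext_iff, Units.val_pow_eq_pow_val, Units.val_one,
      ZMod.pow_prime_eq_one_iff_castHom_eq_one hp (by omega), Units.ext_iff]
    rfl
  have horder : orderOf hu1.unit = p * orderOf (f hu1.unit) :=
    orderOf_eq_prime_mul_orderOf_map f hker (by rwa [hfu, ← orderOf_units, IsUnit.unit_spec])
  intro k
  rw [← hfu, ← mem_comap, ← zpowers_eq_comap_zpowers_map f
    (ZMod.unitsMap_surjective (pow_dvd_pow p N.le_succ)) (ZMod.card_units_prime_pow_succ (by omega))
    horder]

theorem subgroup_mod_p_pow_succ (p : ℕ) [Fact p.Prime] (hp : Odd p) (r : ℤ)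
    (hr : ¬ (p : ℤ) ∣ r) (N : ℕ) (hN : 1 ≤ N)
    (hord : p ∣ orderOf ((r : ZMod (p ^ N))))
    (hu1 : IsUnit ((r : ZMod (p ^ (N + 1))))) (hu2 : IsUnit ((r : ZMod (p ^ N)))) :
    ∀ k : (ZMod (p ^ (N + 1)))ˣ,
      k ∈ Subgroup.zpowers hu1.unit ↔
        Units.map (ZMod.castHom (pow_dvd_pow p (Nat.le_succ N)) (ZMod (p ^ N))).toMonoidHom k
          ∈ Subgroup.zpowers hu2.unit :=
  subgroup_mod_p_pow_succ_general p hp r N hN hord hu1 hu2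
end

section
/- Let p be an odd prime and r ∈ Z_p^× not a root of unity. Let N_r be such that p divides the order of r modulo p^{N_r}. Then the closed subgroup G_r generated by r in Z_p^× equals {x ∈ Z_p^× : x mod p^{N_r} ∈ G_{r,N_r}}, where G_{r,N_r} is the subgroup of (Z/p^{N_r}Z)^× generated by r. -/
/-!
Write `N = N_r`; then `N ≥ 2`, and the order `s` of `r` modulo `p^(N-1)` is prime to `p` by
minimality of `N`. Hence `r^s ≡ 1 + p^(N-1) a` with `p ∤ a`, and for odd `p` such an element
has order `p^(n-N+1)` in `(ℤ/p^n)ˣ`, the order of the kernel of reduction modulo `p^(N-1)`.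
So for every `n ≥ N` the powers of `r` modulo `p^n` contain every unit that is `≡ 1 mod p^N`,
hence every unit congruent to a power of `r` modulo `p^N`; letting `n → ∞` gives density.
Conversely the right-hand side is closed: `‖x‖ = 1` and a congruence modulo `p^N` are closed
conditions.
-/

namespace ZMod

variable {p : ℕ}

theorem exists_eq_one_add_prime_pow_mul {m n : ℕ} (hmn : m < n) {x : ZMod (p ^ n)}
    (h1 : (x.cast : ZMod (p ^ m)) = 1) (h2 : (x.cast : ZMod (p ^ (m + 1))) ≠ 1) :
    ∃ a : ℤ, ¬ (p : ℤ) ∣ a ∧ x = 1 + p ^ m * a := by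
  obtain ⟨z, rfl⟩ := intCast_surjective x
  rw [cast_intCast (pow_dvd_pow p hmn.le), ← Int.cast_one, eq_comm,
    intCast_eq_intCast_iff_dvd_sub] at h1
  rw [cast_intCast (pow_dvd_pow p hmn), ← Int.cast_one, ne_comm, Ne,
    intCast_eq_intCast_iff_dvd_sub] at h2
  obtain ⟨a, ha⟩ := h1
  refine ⟨a, fun ⟨b, hb⟩ => h2 ⟨b, by rw [ha, hb]; push_cast; ring⟩, ?_⟩
  rw [show z = 1 + (p : ℤ) ^ m * a by push_cast at ha; linarith]
  push_cast
  rfl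

variable [Fact p.Prime]

theorem natCard_units_prime_pow {k : ℕ} (hk : 1 ≤ k) :
    Nat.card (ZMod (p ^ k))ˣ = p ^ (k - 1) * (p - 1) := by
  rw [Nat.card_eq_fintype_card, card_units_eq_totient, Nat.totient_prime_pow Fact.out (by omega)]

theorem two_le_of_prime_dvd_orderOf {n : ℕ} {u : (ZMod (p ^ n))ˣ} (h : p ∣ orderOf u) :
    2 ≤ n := by
  have hp := (Fact.out : p.Prime)
  have hdvd := h.trans (orderOf_dvd_natCard u)
  rw [Nat.card_eq_fintype_card, card_units_eq_totient] at hdvd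
  by_contra! hn
  interval_cases n
  · exact hp.one_lt.ne' (Nat.dvd_one.mp (by simpa using hdvd))
  · rw [pow_one, Nat.totient_prime hp] at hdvd
    have := Nat.le_of_dvd (Nat.sub_pos_of_lt hp.one_lt) hdvd
    have := hp.one_lt
    omega

theorem card_ker_unitsMap_prime_pow {m n : ℕ} (hm : 1 ≤ m) (hmn : m ≤ n) :
    Nat.card (unitsMap (pow_dvd_pow p hmn)).ker = p ^ (n - m) := by
  have hp := (Fact.out : p.Prime)
  have hcard := (unitsMap (pow_dvd_pow p hmn)).ker.card_mul_index
  rw [Subgroup.index_ker, MonoidHom.range_eq_top.mpr (unitsMap_surjective _),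
    Subgroup.card_top, natCard_units_prime_pow hm, natCard_units_prime_pow (hm.trans hmn)] at hcard
  refine Nat.eq_of_mul_eq_mul_right
    (Nat.mul_pos (pow_pos hp.pos (m - 1)) (Nat.sub_pos_of_lt hp.one_lt)) ?_
  rw [hcard, ← mul_assoc, ← pow_add]
  congr 2
  omega

theorem orderOf_eq_prime_pow_of_mem_ker_unitsMap (hp : Odd p) {m n : ℕ} (hm : 1 ≤ m)
    (hmn : m < n) {g : (ZMod (p ^ n))ˣ} (h1 : g ∈ (unitsMap (pow_dvd_pow p hmn.le)).ker)
    (h2 : g ∉ (unitsMap (pow_dvd_pow p hmn)).ker) :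
    orderOf g = p ^ (n - m) := by
  have hp3 : 3 ≤ p := by have := (Fact.out : p.Prime).two_le; have := Nat.odd_iff.mp hp; omega
  rw [MonoidHom.mem_ker, Units.ext_iff, unitsMap_val, Units.val_one] at h1 h2
  obtain ⟨a, ha, hga⟩ := exists_eq_one_add_prime_pow_mul hmn h1 h2
  rw [← orderOf_units, hga]
  obtain ⟨k, rfl⟩ := Nat.exists_eq_add_of_le' hmn.le
  rw [Nat.add_sub_cancel]
  exact orderOf_one_add_mul_prime_pow Fact.out m (by omega) (by nlinarith) a ha k

theorem ker_unitsMap_le_zpowers (hp : Odd p) {m n : ℕ} (hm : 1 ≤ m) (hmn : m < n)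
    {g : (ZMod (p ^ n))ˣ} (h1 : g ∈ (unitsMap (pow_dvd_pow p hmn.le)).ker)
    (h2 : g ∉ (unitsMap (pow_dvd_pow p hmn)).ker) :
    (unitsMap (pow_dvd_pow p hmn.le)).ker ≤ Subgroup.zpowers g :=
  (Subgroup.eq_of_le_of_card_ge (Subgroup.zpowers_le.mpr h1) (by
    rw [card_ker_unitsMap_prime_pow hm hmn.le, Nat.card_zpowers,
      orderOf_eq_prime_pow_of_mem_ker_unitsMap hp hm hmn h1 h2])).ge

end ZMod

namespace PadicInt

variable {p : ℕ} [Fact p.Prime]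

theorem toZModPow_eq_iff_dvd_sub {n : ℕ} {a b : ℤ_[p]} :
    toZModPow n a = toZModPow n b ↔ (p : ℤ_[p]) ^ n ∣ a - b := by
  rw [← sub_eq_zero, ← map_sub, ← RingHom.mem_ker, ker_toZModPow, Ideal.mem_span_singleton]

theorem toZModPow_eq_iff_norm_sub_le {n : ℕ} {a b : ℤ_[p]} :
    toZModPow n a = toZModPow n b ↔ ‖a - b‖ ≤ (p : ℝ) ^ (-(n : ℤ)) := by
  rw [toZModPow_eq_iff_dvd_sub, ← Ideal.mem_span_singleton, ← norm_le_pow_iff_mem_span_pow]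

theorem toZModPow_eq_of_le {m n : ℕ} (h : m ≤ n) {a b : ℤ_[p]}
    (hab : toZModPow n a = toZModPow n b) : toZModPow m a = toZModPow m b := by
  rw [← cast_toZModPow m n h, hab, cast_toZModPow m n h]

theorem mem_closure_iff_forall_toZModPow_eq {s : Set ℤ_[p]} {x : ℤ_[p]} :
    x ∈ closure s ↔ ∀ n : ℕ, ∃ y ∈ s, toZModPow n x = toZModPow n y := by
  simp_rw [Metric.mem_closure_iff, toZModPow_eq_iff_norm_sub_le, ← dist_eq_norm]
  constructor
  · intro h n
    have hp : (0 : ℝ) < p := Nat.cast_pos.mpr (Fact.out : p.Prime).pos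
    obtain ⟨y, hy, hxy⟩ := h _ (zpow_pos hp (-(n : ℤ)))
    exact ⟨y, hy, hxy.le⟩
  · intro h ε hε
    obtain ⟨n, hn⟩ := exists_pow_neg_lt p hε
    obtain ⟨y, hy, hxy⟩ := h n
    exact ⟨y, hy, hxy.trans_lt hn⟩

theorem isClosed_setOf_isUnit : IsClosed {x : ℤ_[p] | IsUnit x} := by
  simp_rw [isUnit_iff]
  exact isClosed_eq continuous_norm continuous_const

noncomputable def unitsToZModPow (n : ℕ) : ℤ_[p]ˣ →* (ZMod (p ^ n))ˣ :=
  Units.map (toZModPow n).toMonoidHom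

theorem orderOf_toZModPow_coe (n : ℕ) (u : ℤ_[p]ˣ) :
    orderOf (toZModPow n (u : ℤ_[p])) = orderOf (unitsToZModPow n u) :=
  orderOf_units (y := unitsToZModPow n u)

theorem unitsMap_unitsToZModPow {m n : ℕ} (h : m ≤ n) (u : ℤ_[p]ˣ) :
    ZMod.unitsMap (pow_dvd_pow p h) (unitsToZModPow n u) = unitsToZModPow m u :=
  Units.ext (cast_toZModPow m n h (u : ℤ_[p]))

theorem unitsToZModPow_mem_zpowers_iff {n : ℕ} {r u : ℤ_[p]ˣ} :
    unitsToZModPow n u ∈ Subgroup.zpowers (unitsToZModPow n r) ↔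
      ∃ k : ℤ, toZModPow n (u : ℤ_[p]) = toZModPow n ((r ^ k : ℤ_[p]ˣ) : ℤ_[p]) := by
  simp only [Subgroup.mem_zpowers_iff, ← map_zpow, Units.ext_iff, eq_comm]
  rfl

variable (hp : Odd p) {r : ℤ_[p]ˣ} {N : ℕ}
  (hN : p ∣ orderOf (toZModPow N (r : ℤ_[p])))
  (hNmin : ∀ M : ℕ, 1 ≤ M → p ∣ orderOf (toZModPow M (r : ℤ_[p])) → N ≤ M)
include hp hN hNmin

theorem ker_unitsMap_le_zpowers_unitsToZModPow {n : ℕ} (hn : N ≤ n) :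
    (ZMod.unitsMap (pow_dvd_pow p hn)).ker ≤ Subgroup.zpowers (unitsToZModPow n r) := by
  rw [orderOf_toZModPow_coe] at hN
  have hN2 := ZMod.two_le_of_prime_dvd_orderOf hN
  obtain ⟨M, rfl⟩ : ∃ M, N = M + 1 := ⟨N - 1, by omega⟩
  set s := orderOf (unitsToZModPow M r)
  have hs : ¬ p ∣ s := fun h => by
    have := hNmin M (by omega) (by rwa [orderOf_toZModPow_coe])
    omega
  have hMn : M < n := hn
  have hmem : unitsToZModPow n r ^ s ∈ (ZMod.unitsMap (pow_dvd_pow p hMn.le)).ker := by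
    rw [MonoidHom.mem_ker, map_pow, unitsMap_unitsToZModPow hMn.le, pow_orderOf_eq_one]
  have hnotmem : unitsToZModPow n r ^ s ∉ (ZMod.unitsMap (pow_dvd_pow p hMn)).ker := by
    rw [MonoidHom.mem_ker, map_pow, unitsMap_unitsToZModPow hMn]
    exact fun h => hs (hN.trans (orderOf_dvd_of_pow_eq_one h))
  calc (ZMod.unitsMap (pow_dvd_pow p hn)).ker
      ≤ (ZMod.unitsMap (pow_dvd_pow p hMn.le)).ker := by
        rw [← ZMod.unitsMap_comp (pow_dvd_pow p M.le_succ) (pow_dvd_pow p hn),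
          ← MonoidHom.comap_ker]
        exact MonoidHom.ker_le_comap _ _
    _ ≤ Subgroup.zpowers (unitsToZModPow n r ^ s) :=
        ZMod.ker_unitsMap_le_zpowers hp (by omega) hMn hmem hnotmem
    _ ≤ Subgroup.zpowers (unitsToZModPow n r) :=
        Subgroup.zpowers_le.mpr (pow_mem (Subgroup.mem_zpowers _) s)

theorem unitsToZModPow_mem_zpowers_of_le {n : ℕ} (hn : N ≤ n) {u : ℤ_[p]ˣ}
    (hu : unitsToZModPow N u ∈ Subgroup.zpowers (unitsToZModPow N r)) :
    unitsToZModPow n u ∈ Subgroup.zpowers (unitsToZModPow n r) := by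
  obtain ⟨k, hk⟩ := hu
  have hker : unitsToZModPow n u * (unitsToZModPow n r ^ k)⁻¹ ∈
      (ZMod.unitsMap (pow_dvd_pow p hn)).ker := by
    rw [MonoidHom.mem_ker, map_mul, map_inv, map_zpow, unitsMap_unitsToZModPow hn,
      unitsMap_unitsToZModPow hn, ← hk, mul_inv_cancel]
  simpa using mul_mem (ker_unitsMap_le_zpowers_unitsToZModPow hp hN hNmin hn hker)
    (zpow_mem (Subgroup.mem_zpowers _) k)

end PadicInt

theorem closure_powers_eq_congruence_class_general (p : ℕ) [Fact p.Prime] (hp : Odd p) (r : ℤ_[p]ˣ)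
    (Nr : ℕ)
    (hNrdvd : p ∣ orderOf (PadicInt.toZModPow Nr (r : ℤ_[p])))
    (hNrmin : ∀ M : ℕ, 1 ≤ M → p ∣ orderOf (PadicInt.toZModPow M (r : ℤ_[p])) → Nr ≤ M) :
    closure {x : ℤ_[p] | ∃ k : ℤ, x = ((r ^ k : ℤ_[p]ˣ) : ℤ_[p])} =
      {x : ℤ_[p] | IsUnit x ∧
        ∃ k : ℤ, PadicInt.toZModPow Nr x = PadicInt.toZModPow Nr ((r ^ k : ℤ_[p]ˣ) : ℤ_[p])} := by
  apply Set.Subset.antisymm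
  · intro x hx
    obtain ⟨_, ⟨k, rfl⟩, hxk⟩ := PadicInt.mem_closure_iff_forall_toZModPow_eq.mp hx Nr
    refine ⟨closure_minimal ?_ PadicInt.isClosed_setOf_isUnit hx, k, hxk⟩
    rintro _ ⟨k, rfl⟩
    exact (r ^ k).isUnit
  · rintro x ⟨hx, hxk⟩
    lift x to ℤ_[p]ˣ using hx
    refine PadicInt.mem_closure_iff_forall_toZModPow_eq.mpr fun n => ?_
    obtain ⟨m, hm⟩ := PadicInt.unitsToZModPow_mem_zpowers_iff.mp <|
      PadicInt.unitsToZModPow_mem_zpowers_of_le hp hNrdvd hNrmin (le_max_right n Nr)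
        (PadicInt.unitsToZModPow_mem_zpowers_iff.mpr hxk)
    exact ⟨_, ⟨m, rfl⟩, PadicInt.toZModPow_eq_of_le (le_max_left n Nr) hm⟩

theorem closure_powers_eq_congruence_class (p : ℕ) [Fact p.Prime] (hp : Odd p) (r : ℤ_[p]ˣ)
    (hroot : ∀ n : ℕ, 0 < n → r ^ n ≠ 1) (Nr : ℕ) (hNr1 : 1 ≤ Nr)
    (hNrdvd : p ∣ orderOf (PadicInt.toZModPow Nr (r : ℤ_[p])))
    (hNrmin : ∀ M : ℕ, 1 ≤ M → p ∣ orderOf (PadicInt.toZModPow M (r : ℤ_[p])) → Nr ≤ M) :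
    closure {x : ℤ_[p] | ∃ k : ℤ, x = ((r ^ k : ℤ_[p]ˣ) : ℤ_[p])} =
      {x : ℤ_[p] | IsUnit x ∧
        ∃ k : ℤ, PadicInt.toZModPow Nr x = PadicInt.toZModPow Nr ((r ^ k : ℤ_[p]ˣ) : ℤ_[p])} :=
  closure_powers_eq_congruence_class_general p hp r Nr hNrdvd hNrmin
end

section
/- Let p be a prime, N ≥ 1, and r ∈ Z_p with |r|_p = p^{-N}. Then the set D = { x_0 + x_1 r + x_2 r^2 + ... + x_n r^n : n ≥ 0, each x_i an integer with 0 ≤ x_i ≤ p^N − 1 } is dense in Z_p. -/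
/-!
Since `|r|_p = |p^N|_p`, `r` divides `p^N`, so every `x ∈ ℤ_p` can be written `x = c + r z` with a
digit `0 ≤ c < p^N` (take for `c` the approximation of `x` modulo `p^N`). Iterating on `z` gives
`x = c₀ + c₁ r + ⋯ + cₙ rⁿ + r^(n+1) w` with `w ∈ ℤ_p`, and the error `r^(n+1) w` has norm at most
`|r|_p^(n+1) → 0`.
-/

open Finset

theorem exists_digits_add_pow_mul {R : Type*} [CommSemiring R] (P : ℕ → Prop) (r : R)
    (hstep : ∀ x : R, ∃ c, P c ∧ ∃ z, x = c + r * z) (x : R) :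
    ∃ c : ℕ → ℕ, (∀ i, P (c i)) ∧ ∀ n, ∃ w, x = ∑ i ∈ range n, (c i : R) * r ^ i + r ^ n * w := by
  choose digit hdigit quot hquot using hstep
  refine ⟨fun i => digit (quot^[i] x), fun i => hdigit _, fun n => ⟨quot^[n] x, ?_⟩⟩
  induction n with
  | zero => simp
  | succ n ih =>
    calc x = ∑ i ∈ range n, (digit (quot^[i] x) : R) * r ^ i + r ^ n * quot^[n] x := ih
      _ = ∑ i ∈ range n, (digit (quot^[i] x) : R) * r ^ i
            + r ^ n * (digit (quot^[n] x) + r * quot (quot^[n] x)) := by rw [← hquot]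
      _ = _ := by rw [sum_range_succ, Function.iterate_succ_apply']; ring

namespace PadicInt

variable {p : ℕ} [Fact p.Prime]

theorem dvd_of_norm_le {x y : ℤ_[p]} (h : ‖y‖ ≤ ‖x‖) : x ∣ y := by
  by_cases hx : x = 0
  · rw [hx, norm_zero] at h
    rw [norm_le_zero_iff.mp h]
    exact dvd_zero x
  have hx' : (x : ℚ_[p]) ≠ 0 := coe_ne_zero.mpr hx
  have hquot : ‖(y : ℚ_[p]) / x‖ ≤ 1 := by
    rw [norm_div, div_le_one (norm_pos_iff.mpr hx')]
    exact h
  refine ⟨⟨(y : ℚ_[p]) / x, hquot⟩, Subtype.ext ?_⟩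
  change (y : ℚ_[p]) = x * (y / x)
  field_simp

theorem exists_lt_pow_add_mul {r : ℤ_[p]} {N : ℕ} (hr : r ∣ (p : ℤ_[p]) ^ N) (x : ℤ_[p]) :
    ∃ c < p ^ N, ∃ z, x = c + r * z := by
  obtain ⟨z, hz⟩ := hr.trans (Ideal.mem_span_singleton.mp (appr_spec N x))
  exact ⟨x.appr N, x.appr_lt N, z, by rw [← hz]; ring⟩

theorem dense_of_forall_exists_add_pow_mul {S : Set ℤ_[p]} {r : ℤ_[p]} (hr : ‖r‖ < 1)
    (h : ∀ x (n : ℕ), ∃ s ∈ S, ∃ w, x = s + r ^ n * w) : Dense S := by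
  rw [Metric.dense_iff]
  intro x ε hε
  obtain ⟨n, hn⟩ :=
    ((tendsto_pow_atTop_nhds_zero_of_lt_one (norm_nonneg r) hr).eventually (gt_mem_nhds hε)).exists
  obtain ⟨s, hs, w, rfl⟩ := h x n
  refine ⟨s, ?_, hs⟩
  rw [Metric.mem_ball, dist_eq_norm, sub_add_cancel_left, norm_neg, norm_mul, norm_pow]
  calc ‖r‖ ^ n * ‖w‖ ≤ ‖r‖ ^ n := mul_le_of_le_one_right (by positivity) w.norm_le_one
    _ < ε := hn

end PadicInt

theorem digit_expansion_dense (p : ℕ) [Fact p.Prime] (N : ℕ) (hN : 1 ≤ N) (r : ℤ_[p])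
    (hr : ‖r‖ = (p : ℝ) ^ (-(N : ℤ))) :
    Dense {x : ℤ_[p] | ∃ (n : ℕ) (c : ℕ → ℕ), (∀ i, c i ≤ p ^ N - 1) ∧
      x = ∑ i ∈ Finset.range (n + 1), (c i : ℤ_[p]) * r ^ i} := by
  have hr_lt_one : ‖r‖ < 1 := by
    rw [hr]
    exact zpow_lt_one_of_neg₀ (by exact_mod_cast (Fact.out : p.Prime).one_lt) (by omega)
  have hr_dvd : r ∣ (p : ℤ_[p]) ^ N := PadicInt.dvd_of_norm_le (by rw [PadicInt.norm_p_pow, hr])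
  have hstep (y : ℤ_[p]) : ∃ c, c ≤ p ^ N - 1 ∧ ∃ z, y = c + r * z := by
    obtain ⟨c, hc, hy⟩ := PadicInt.exists_lt_pow_add_mul hr_dvd y
    exact ⟨c, Nat.le_sub_one_of_lt hc, hy⟩
  refine PadicInt.dense_of_forall_exists_add_pow_mul hr_lt_one fun x n => ?_
  obtain ⟨c, hc, hx⟩ := exists_digits_add_pow_mul _ r hstep x
  obtain ⟨w, hw⟩ := hx (n + 1)
  exact ⟨_, ⟨n, c, hc, rfl⟩, r * w, by rw [hw, pow_succ, mul_assoc]⟩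
end
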